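/- Let F be an algebraically closed field of characteristic zero, let L be a Lie algebra over F with a nontrivial finite-dimensional Cartan subalgebra H such that L = ⊕_{α∈R} L_α is the direct sum of its root spaces with L_0 = H, and let N ≥ 3 be an integer. Then every N-derivation of L of homogeneous degree 0 (i.e., with φ(L_α) ⊆ L_α for every root α) is a derivation of L. -/

import Mathlib

open scoped BigOperators Classical

/-- Right-iterated Lie bracket `[x₁, x₂, …, xₖ] = [x₁, [x₂, [… [x_{k-1}, xₖ] …]]]`. -/
def itBracket {L : Type*} [LieRing L] : List L → L
  | [] => 0
  | [a] => a
  | a :: b :: l => ⁅a, itBracket (b :: l)⁆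

/-- `φ` is an `N`-derivation of the Lie algebra `L`:
`φ [x₁, …, x_N] = ∑ i, [x₁, …, x_{i-1}, φ xᵢ, x_{i+1}, …, x_N]`. -/
def IsNDeriv (F : Type*) {L : Type*} [CommRing F] [LieRing L] [LieAlgebra F L]
    (N : ℕ) (φ : L →ₗ[F] L) : Prop :=
  ∀ x : Fin N → L,
    φ (itBracket (List.ofFn x)) =
      ∑ i : Fin N, itBracket (List.ofFn (Function.update x i (φ (x i))))

/-- The root space `L_α = { x ∈ L | [h, x] = α(h) • x for all h ∈ H }` attached to a linear
functional `α` on a Lie subalgebra `H` of `L`. -/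
def rootSp (F : Type*) {L : Type*} [CommRing F] [LieRing L] [LieAlgebra F L]
    (H : LieSubalgebra F L) (α : Module.Dual F H) : Submodule F L where
  carrier := {x : L | ∀ h : H, ⁅(h : L), x⁆ = α h • x}
  add_mem' := by
    intro a b ha hb h
    rw [lie_add, ha h, hb h, smul_add]
  zero_mem' := by intro h; simp
  smul_mem' := by
    intro c a ha h
    rw [lie_smul, ha h, smul_comm]

section helpers

@[simp] lemma itBracket_singleton {L : Type*} [LieRing L] (a : L) : itBracket [a] = a := rfl

lemma itBracket_cons' {L : Type*} [LieRing L] (a : L) (l : List L) (hl : l ≠ []) :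
    itBracket (a :: l) = ⁅a, itBracket l⁆ := by
  cases l with
  | nil => exact absurd rfl hl
  | cons b t => rfl

variable {F L : Type*} [CommRing F] [LieRing L] [LieAlgebra F L] {H : LieSubalgebra F L}

lemma mem_rootSp_apply {β : Module.Dual F H} {y : L} (hy : y ∈ rootSp F H β) (h : H) :
    ⁅(h : L), y⁆ = β h • y := hy h

lemma itBracket_replicate {β : Module.Dual F H} (h : H) (b : L) (t : List L)
    (hw : itBracket (b :: t) ∈ rootSp F H β) (k : ℕ) :
    itBracket (List.replicate k (h : L) ++ (b :: t)) = (β h ^ k) • itBracket (b :: t) := by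
  induction k with
  | zero => simp
  | succ j ih =>
      rw [List.replicate_succ, List.cons_append, itBracket_cons' _ _ (by simp), ih,
        lie_smul, mem_rootSp_apply hw h, smul_smul, ← pow_succ]

lemma itBracket_set_replicate {β : Module.Dual F H} (h g : H) (b : L) (t : List L)
    (hw : itBracket (b :: t) ∈ rootSp F H β) :
    ∀ k i, i < k → itBracket ((List.replicate k (h : L) ++ (b :: t)).set i (g : L)) =
      (β h ^ (k-1) * β g) • itBracket (b :: t) := by
  intro k
  induction k with
  | zero => intro i hi; omega
  | succ j ih =>
      intro i hi
      cases i with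
      | zero =>
          rw [List.replicate_succ, List.cons_append, List.set_cons_zero,
            itBracket_cons' _ _ (by simp), itBracket_replicate h b t hw j,
            lie_smul, mem_rootSp_apply hw g, smul_smul]
          norm_num
      | succ i' =>
          have hij : i' < j := by omega
          rw [List.replicate_succ, List.cons_append, List.set_cons_succ,
            itBracket_cons' _ _ (by simp), ih i' hij, lie_smul, mem_rootSp_apply hw h,
            smul_smul]
          congr 1
          have hj : j - 1 + 1 = j := by omega
          have he : β h ^ (j-1) * β g * β h = β h ^ (j-1+1) * β g := by ring
          rw [he, hj]
          norm_num

lemma set_replicate_last {L : Type*} [LieRing L] (a c y : L) :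
    ∀ k, (List.replicate k a ++ [y]).set k c = List.replicate k a ++ [c]
  | 0 => rfl
  | k+1 => by
      rw [List.replicate_succ, List.cons_append, List.set_cons_succ,
        set_replicate_last a c y k, List.cons_append]

lemma ofFn_update {α : Type*} {n : ℕ} (x : Fin n → α) (i : Fin n) (a : α) :
    List.ofFn (Function.update x i a) = (List.ofFn x).set i a := by
  apply List.ext_getElem
  · simp
  · intro j h1 h2
    simp only [List.getElem_ofFn, List.getElem_set, List.length_ofFn] at *
    rcases eq_or_ne j i.val with h | h
    · simp [h, Function.update, Fin.ext_iff]
    · rw [if_neg (Ne.symm h), Function.update_of_ne (by simp [Fin.ext_iff, h])]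

lemma isNDeriv_list {N : ℕ} {φ : L →ₗ[F] L} (hφ : IsNDeriv F N φ) (l : List L)
    (hl : l.length = N) :
    φ (itBracket l) = ∑ i : Fin N, itBracket (l.set i (φ (l[i.val]'(by omega)))) := by
  subst hl
  have h := hφ (fun i : Fin l.length => l[(i : ℕ)])
  rw [List.ofFn_getElem (xs := l)] at h
  simpa only [ofFn_update, List.ofFn_getElem] using h

end helpers


lemma lemA {F L : Type*} [Field F] [CharZero F] [LieRing L] [LieAlgebra F L]
    {H : LieSubalgebra F L} {m : ℕ} {φ : L →ₗ[F] L} (hφ : IsNDeriv F (m+3) φ)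
    {β : Module.Dual F H} {y : L} (hy : y ∈ rootSp F H β) (hy0 : y ≠ 0)
    (hφy : φ y ∈ rootSp F H β)
    (h : H) (hβh : β h ≠ 0) (g : H) (hg : (g : L) = φ (h : L)) :
    β g = 0 := by
  set l : List L := List.replicate (m+2) (h : L) ++ [y] with hldef
  have hlen : l.length = m + 3 := by simp [hldef]
  have key := isNDeriv_list hφ l hlen
  rw [Fin.sum_univ_castSucc] at key
  have hget1 : ∀ (i : ℕ) (hi : i < m + 2) (hi' : i < l.length), l[i]'hi' = (h : L) := by
    intro i hi hi'
    simp only [hldef]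
    rw [List.getElem_append_left (by simpa using hi)]
    simp
  have hmid : ∀ (i : Fin (m+2)) (pf : ((Fin.castSucc i : Fin (m+3)) : ℕ) < l.length),
      itBracket (l.set ((Fin.castSucc i : Fin (m+3)) : ℕ)
        (φ (l[((Fin.castSucc i : Fin (m+3)) : ℕ)]'pf))) = (β h ^ (m+1) * β g) • y := by
    intro i pf
    rw [hget1 _ (by simpa using i.isLt) pf, ← hg, hldef]
    have := itBracket_set_replicate h g y [] hy (m+2) ((Fin.castSucc i : Fin (m+3)) : ℕ)
      (by simpa using i.isLt)
    simpa using this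
  have hlast : ∀ (pf : ((Fin.last (m+2) : Fin (m+3)) : ℕ) < l.length),
      itBracket (l.set ((Fin.last (m+2) : Fin (m+3)) : ℕ)
        (φ (l[((Fin.last (m+2) : Fin (m+3)) : ℕ)]'pf))) = (β h ^ (m+2)) • φ y := by
    intro pf
    have hgety : l[((Fin.last (m+2) : Fin (m+3)) : ℕ)]'pf = y := by
      simp only [hldef]
      rw [List.getElem_append_right (by simp)]
      simp
    rw [hgety, hldef]
    rw [show ((Fin.last (m+2) : Fin (m+3)) : ℕ) = m + 2 from rfl, set_replicate_last]
    have := itBracket_replicate h (φ y) [] hφy (m+2)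
    simpa using this
  simp only [hmid, hlast] at key
  have hitl : itBracket l = (β h ^ (m+2)) • y := by
    rw [hldef]
    have := itBracket_replicate h y [] hy (m+2)
    simpa using this
  rw [hitl, map_smul, Finset.sum_const, Finset.card_univ, Fintype.card_fin] at key
  have hS : (m+2) • ((β h ^ (m+1) * β g) • y) = 0 := right_eq_add.mp key
  rw [← Nat.cast_smul_eq_nsmul F, smul_smul] at hS
  rcases smul_eq_zero.mp hS with hc | hy'
  · rcases mul_eq_zero.mp hc with hc1 | hc2
    · exact absurd hc1 (Nat.cast_ne_zero.mpr (by omega))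
    · rcases mul_eq_zero.mp hc2 with hc3 | hc4
      · exact absurd hc3 (pow_ne_zero _ hβh)
      · exact hc4
  · exact absurd hy' hy0

lemma mainB {F L : Type*} [Field F] [LieRing L] [LieAlgebra F L]
    {H : LieSubalgebra F L} {m : ℕ} {φ : L →ₗ[F] L} (hφ : IsNDeriv F (m+3) φ)
    {β : Module.Dual F H} {y : L} (hy : y ∈ rootSp F H β) (hφy : φ y ∈ rootSp F H β)
    (h : H) (hβh : β h ≠ 0) (g : H) (hg : (g : L) = φ (h : L)) (hβg : β g = 0) (x : L) :
    φ ⁅x, y⁆ = ⁅φ x, y⁆ + ⁅x, φ y⁆ := by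
  set r : List L := List.replicate (m+1) (h : L) ++ [y] with hrdef
  set l : List L := x :: r with hldef
  have hrne : r ≠ [] := by simp [hrdef]
  have hitr : itBracket r = β h ^ (m+1) • y := by
    simp only [hrdef]
    simpa using itBracket_replicate h y [] hy (m+1)
  have hlen : l.length = m + 3 := by simp [hldef, hrdef]
  have key := isNDeriv_list hφ l hlen
  rw [Fin.sum_univ_succ] at key
  rw [Fin.sum_univ_castSucc] at key
  have hterm0 : ∀ (pf : (((0 : Fin (m+3))) : ℕ) < l.length),
      itBracket (l.set (((0 : Fin (m+3))) : ℕ) (φ (l[(((0 : Fin (m+3))) : ℕ)]'pf)))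
        = β h ^ (m+1) • ⁅φ x, y⁆ := by
    intro pf
    have hx0 : l[(((0 : Fin (m+3))) : ℕ)]'pf = x := by simp [hldef]
    rw [hx0]
    show itBracket (l.set 0 (φ x)) = _
    rw [hldef, List.set_cons_zero, itBracket_cons' _ _ hrne, hitr, lie_smul]
  have hmid : ∀ (i : Fin (m+1)) (pf : (((Fin.castSucc i).succ : Fin (m+3)) : ℕ) < l.length),
      itBracket (l.set (((Fin.castSucc i).succ : Fin (m+3)) : ℕ)
        (φ (l[(((Fin.castSucc i).succ : Fin (m+3)) : ℕ)]'pf))) = 0 := by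
    intro i pf
    have hiv : (((Fin.castSucc i).succ : Fin (m+3)) : ℕ) = (i : ℕ) + 1 := rfl
    have hgeth : l[(((Fin.castSucc i).succ : Fin (m+3)) : ℕ)]'pf = (h : L) := by
      simp only [hldef, hrdef, hiv]
      rw [List.getElem_cons_succ]
      rw [List.getElem_append_left (by simpa using i.isLt)]
      simp
    rw [hgeth, hiv, ← hg]
    simp only [hldef, hrdef]
    rw [List.set_cons_succ, itBracket_cons' _ _ (by simp)]
    have := itBracket_set_replicate h g y [] hy (m+1) (i : ℕ) (by simpa using i.isLt)
    simp only [itBracket_singleton] at this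
    rw [this, hβg, mul_zero, zero_smul, lie_zero]
  have hlast : ∀ (pf : (((Fin.last (m+1)).succ : Fin (m+3)) : ℕ) < l.length),
      itBracket (l.set (((Fin.last (m+1)).succ : Fin (m+3)) : ℕ)
        (φ (l[(((Fin.last (m+1)).succ : Fin (m+3)) : ℕ)]'pf))) = β h ^ (m+1) • ⁅x, φ y⁆ := by
    intro pf
    have hiv : (((Fin.last (m+1)).succ : Fin (m+3)) : ℕ) = (m + 1) + 1 := rfl
    have hgety : l[(((Fin.last (m+1)).succ : Fin (m+3)) : ℕ)]'pf = y := by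
      simp only [hldef, hrdef, hiv]
      rw [List.getElem_cons_succ]
      rw [List.getElem_append_right (by simp)]
      simp
    rw [hgety, hiv]
    simp only [hldef, hrdef]
    rw [List.set_cons_succ, set_replicate_last, itBracket_cons' _ _ (by simp)]
    have := itBracket_replicate h (φ y) [] hφy (m+1)
    simp only [itBracket_singleton] at this
    rw [this, lie_smul]
  have hitl : φ (itBracket l) = β h ^ (m+1) • φ ⁅x, y⁆ := by
    rw [hldef, itBracket_cons' _ _ hrne, hitr, lie_smul, map_smul]
  simp only [hmid, hlast, hterm0, hitl, Finset.sum_const_zero, zero_add] at key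
  apply smul_right_injective L (pow_ne_zero (m+1) hβh)
  show β h ^ (m+1) • φ ⁅x, y⁆ = β h ^ (m+1) • (⁅φ x, y⁆ + ⁅x, φ y⁆)
  rw [key, smul_add]

/-- Let `L` be a Lie algebra over an algebraically closed field of characteristic zero, graded
by a nontrivial finite-dimensional Cartan subalgebra `H` (so `L = ⊕_α L_α` with `L_0 = H`),
and let `N ≥ 3`.  Then every `N`-derivation of `L` of homogeneous degree `0` is a derivation
of `L`. -/
theorem nDeriv_degZero_isDerivation (F L : Type*) [Field F] [IsAlgClosed F] [CharZero F] [LieRing L] [LieAlgebra F L]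
    (H : LieSubalgebra F L) [H.IsCartanSubalgebra] [FiniteDimensional F H] (hH : H ≠ ⊥)
    (hdec : DirectSum.IsInternal (fun α : Module.Dual F H => rootSp F H α))
    (hzero : rootSp F H (0 : Module.Dual F H) = H.toSubmodule)
    (N : ℕ) (hN : 3 ≤ N) (φ : L →ₗ[F] L) (hφ : IsNDeriv F N φ)
    (hdeg : ∀ α : Module.Dual F H, ∀ x ∈ rootSp F H α, φ x ∈ rootSp F H α) :
    ∀ x y : L, φ ⁅x, y⁆ = ⁅φ x, y⁆ + ⁅x, φ y⁆ := by
  obtain ⟨m, rfl⟩ : ∃ m, N = m + 3 := ⟨N - 3, by omega⟩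
  have hφH : ∀ g : H, φ (g : L) ∈ H := by
    intro g
    have h1 : (g : L) ∈ rootSp F H 0 := by rw [hzero]; exact g.2
    have h2 := hdeg 0 _ h1
    rw [hzero] at h2
    exact h2
  have lemA' : ∀ (β : Module.Dual F H) (y : L), y ∈ rootSp F H β → y ≠ 0 → β ≠ 0 →
      ∀ g : H, β ⟨φ (g : L), hφH g⟩ = 0 := by
    intro β y hy hy0 hβ g
    have hφy := hdeg β y hy
    obtain ⟨h₀, hh₀⟩ : ∃ h₀ : H, β h₀ ≠ 0 := by
      by_contra hc
      push_neg at hc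
      exact hβ (LinearMap.ext fun z => by simpa using hc z)
    have base : β ⟨φ (h₀ : L), hφH h₀⟩ = 0 := lemA hφ hy hy0 hφy h₀ hh₀ _ rfl
    by_cases hg : β g = 0
    · have hsum : β (g + h₀) ≠ 0 := by rw [map_add, hg, zero_add]; exact hh₀
      have hadd : β ⟨φ ((g + h₀ : H) : L), hφH (g + h₀)⟩ = 0 :=
        lemA hφ hy hy0 hφy _ hsum _ rfl
      have hsplit : (⟨φ ((g + h₀ : H) : L), hφH (g + h₀)⟩ : H)
          = ⟨φ (g : L), hφH g⟩ + ⟨φ (h₀ : L), hφH h₀⟩ := by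
        ext
        simp [map_add]
      rw [hsplit, map_add, base, add_zero] at hadd
      exact hadd
    · exact lemA hφ hy hy0 hφy g hg _ rfl
  suffices Hmain : ∀ y, y ∈ (⨆ β : Module.Dual F H, rootSp F H β) →
      ∀ x : L, φ ⁅x, y⁆ = ⁅φ x, y⁆ + ⁅x, φ y⁆ by
    intro x y
    exact Hmain y (by rw [hdec.submodule_iSup_eq_top]; trivial) x
  intro y hy
  refine Submodule.iSup_induction _ (motive := fun y => ∀ x : L, φ ⁅x, y⁆ = ⁅φ x, y⁆ + ⁅x, φ y⁆)
    hy ?_ (by intro x; simp) ?_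
  · -- mem case
    intro β y hyβ
    by_cases hy0 : y = 0
    · intro x; simp [hy0]
    by_cases hβ : β = 0
    · -- y ∈ H
      subst hβ
      have hyH : y ∈ H := by rw [hzero] at hyβ; exact hyβ
      set gy : H := ⟨y, hyH⟩ with hgy
      intro x
      have hx : x ∈ ⨆ α : Module.Dual F H, rootSp F H α := by
        rw [hdec.submodule_iSup_eq_top]; trivial
      refine Submodule.iSup_induction _ (motive := fun x => φ ⁅x, y⁆ = ⁅φ x, y⁆ + ⁅x, φ y⁆)
        hx ?_ (by simp) ?_
      · intro α x hxα
        have h1 : ⁅y, x⁆ = α gy • x := hxα gy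
        have hb : ⁅x, y⁆ = -(α gy • x) := by rw [← h1, ← lie_skew]
        have hφx := hdeg α x hxα
        have h2 : ⁅φ x, y⁆ = -(α gy • φ x) := by
          have h1' : ⁅y, φ x⁆ = α gy • φ x := hφx gy
          rw [← h1', ← lie_skew]
        have hφyH : φ y ∈ H := hφH gy
        have h3 : ⁅x, φ y⁆ = -(α ⟨φ y, hφyH⟩ • x) := by
          have h1'' : ⁅φ y, x⁆ = α ⟨φ y, hφyH⟩ • x := hxα ⟨φ y, hφyH⟩
          rw [← h1'', ← lie_skew]
        have h4 : α ⟨φ y, hφyH⟩ • x = 0 := by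
          by_cases hα : α = 0
          · simp [hα]
          by_cases hx0 : x = 0
          · simp [hx0]
          · have := lemA' α x hxα hx0 hα gy
            rw [this]
            simp
        rw [hb, h2, h3, h4, map_neg, map_smul]
        simp
      · intro a b ha hb
        rw [add_lie, map_add, ha, hb, map_add, add_lie, add_lie]
        abel
    · -- β ≠ 0
      obtain ⟨h, hh⟩ : ∃ h : H, β h ≠ 0 := by
        by_contra hc
        push_neg at hc
        exact hβ (LinearMap.ext fun z => by simpa using hc z)
      have hφy := hdeg β y hyβ
      have hβg := lemA hφ hyβ hy0 hφy h hh ⟨φ (h : L), hφH h⟩ rfl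
      intro x
      exact mainB hφ hyβ hφy h hh _ rfl hβg x
  · -- add case
    intro a b ha hb x
    rw [lie_add, map_add, ha x, hb x, map_add, lie_add, lie_add]
    abel
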